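/- Every locally two-distance set on a sphere S^{d-1} has at most binom(d+1, 2) + d = binom(d+1,2)+binom(d,1) points; i.e., |X| ≤ binom(d+1,2) + d. -/

import Mathlib

/-!
For `x ∈ X` put `F_x(y) = ∏_{a ∈ A_X(x)} (‖x - y‖² - a²)`. It vanishes on `X \ {x}` but not at
`x`, so the `F_x` are linearly independent. On the unit sphere `‖x - y‖² = 2 - 2⟪x, y⟫`, so `F_x`
is a polynomial of degree at most `2` in `⟪x, y⟫`, hence lies in the span of the `binom(d+1,2)`
products `yᵢ yⱼ` and the `d` coordinates `yᵢ` (the constants are `∑ᵢ yᵢ²` there).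
-/

open scoped Classical

/-- `A_X(x)`: the set of distances from `x` to the other points of `X`. -/
noncomputable def distancesFrom {d : ℕ} (X : Finset (EuclideanSpace ℝ (Fin d)))
    (x : EuclideanSpace ℝ (Fin d)) : Finset ℝ :=
  (X.erase x).image (fun y => dist x y)

open Polynomial Metric Module

theorem linearIndependent_of_apply_eq_zero_of_ne {ι α K : Type*} [Ring K] [NoZeroDivisors K]
    {f : ι → α → K} (p : ι → α) (hoff : ∀ i j, i ≠ j → f i (p j) = 0) (hdiag : ∀ i, f i (p i) ≠ 0) :
    LinearIndependent K f := by
  rw [linearIndependent_iff']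
  intro s c hsum i hi
  have hpi : ∑ j ∈ s, c j * f j (p i) = 0 := by
    simpa using congrFun hsum (p i)
  rw [Finset.sum_eq_single i (fun j _ hji => by rw [hoff j i hji, mul_zero])
    (absurd hi)] at hpi
  exact (mul_eq_zero.mp hpi).resolve_right (hdiag i)

theorem natDegree_prod_linear_le {ι R : Type*} [CommSemiring R] (s : Finset ι) (a b : ι → R) :
    (∏ i ∈ s, (C (a i) * X + C (b i))).natDegree ≤ s.card :=
  (natDegree_prod_le _ _).trans <|
    (Finset.sum_le_card_nsmul s _ 1 fun _ _ => natDegree_linear_le).trans_eq (mul_one _)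

theorem dist_sq_eq_two_sub_two_inner {V : Type*} [NormedAddCommGroup V] [InnerProductSpace ℝ V]
    {x y : V} (hx : ‖x‖ = 1) (hy : ‖y‖ = 1) : dist x y ^ 2 = 2 - 2 * inner ℝ x y := by
  rw [dist_eq_norm, norm_sub_sq_real, hx, hy]
  ring

noncomputable def sphereQuadratics (d : ℕ) :
    Submodule ℝ (sphere (0 : EuclideanSpace ℝ (Fin d)) 1 → ℝ) :=
  Submodule.span ℝ (Set.range (Sum.elim
    (Sym2.lift ⟨fun i j y =>
      (y : EuclideanSpace ℝ (Fin d)) i * (y : EuclideanSpace ℝ (Fin d)) j, fun _ _ => by ext; ring⟩)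
    fun i y => (y : EuclideanSpace ℝ (Fin d)) i))

section

variable {d : ℕ}

local notation "E" => EuclideanSpace ℝ (Fin d)
local notation "𝕊" => sphere (0 : E) 1

theorem real_inner_eq_sum_mul (x y : E) : inner ℝ x y = ∑ i, x i * y i := by
  simp only [PiLp.inner_apply, RCLike.inner_apply, Real.ringHom_apply, mul_comm]

instance : FiniteDimensional ℝ (sphereQuadratics d) :=
  FiniteDimensional.span_of_finite ℝ (Set.finite_range _)

theorem finrank_sphereQuadratics_le :
    finrank ℝ (sphereQuadratics d) ≤ (d + 1).choose 2 + d := by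
  refine (finrank_range_le_card _).trans_eq ?_
  simp [Sym2.card]

theorem coord_mul_coord_mem_sphereQuadratics (i j : Fin d) :
    (fun y : 𝕊 => (y : E) i * (y : E) j) ∈ sphereQuadratics d :=
  Submodule.subset_span ⟨Sum.inl s(i, j), rfl⟩

theorem coord_mem_sphereQuadratics (i : Fin d) :
    (fun y : 𝕊 => (y : E) i) ∈ sphereQuadratics d :=
  Submodule.subset_span ⟨Sum.inr i, rfl⟩

theorem one_mem_sphereQuadratics : (1 : 𝕊 → ℝ) ∈ sphereQuadratics d := by
  have h : (1 : 𝕊 → ℝ) = ∑ i, fun y : 𝕊 => (y : E) i * (y : E) i := by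
    ext y
    rw [Finset.sum_apply, ← real_inner_eq_sum_mul, real_inner_self_eq_norm_sq,
      norm_eq_of_mem_sphere, one_pow, Pi.one_apply]
  rw [h]
  exact Submodule.sum_mem _ fun i _ => coord_mul_coord_mem_sphereQuadratics i i

theorem inner_mem_sphereQuadratics (x : E) :
    (fun y : 𝕊 => inner ℝ x (y : E)) ∈ sphereQuadratics d := by
  have h : (fun y : 𝕊 => inner ℝ x (y : E)) =
      ∑ i, x i • fun y : 𝕊 => (y : E) i := by
    ext y
    simp [real_inner_eq_sum_mul, Finset.sum_apply]
  rw [h]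
  exact Submodule.sum_mem _ fun i _ => Submodule.smul_mem _ _ (coord_mem_sphereQuadratics i)

theorem inner_sq_mem_sphereQuadratics (x : E) :
    (fun y : 𝕊 => inner ℝ x (y : E) ^ 2) ∈ sphereQuadratics d := by
  have h : (fun y : 𝕊 => inner ℝ x (y : E) ^ 2) =
      ∑ i, ∑ j, (x i * x j) • fun y : 𝕊 => (y : E) i * (y : E) j := by
    ext y
    simp only [real_inner_eq_sum_mul, sq, Finset.sum_mul_sum, Finset.sum_apply, Pi.smul_apply,
      smul_eq_mul]
    exact Finset.sum_congr rfl fun i _ => Finset.sum_congr rfl fun j _ => by ring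
  rw [h]
  exact Submodule.sum_mem _ fun i _ => Submodule.sum_mem _ fun j _ =>
    Submodule.smul_mem _ _ (coord_mul_coord_mem_sphereQuadratics i j)

theorem eval_inner_mem_sphereQuadratics {p : ℝ[X]} (hp : p.natDegree ≤ 2) (x : E) :
    (fun y : 𝕊 => p.eval (inner ℝ x (y : E))) ∈ sphereQuadratics d := by
  have h : (fun y : 𝕊 => p.eval (inner ℝ x (y : E))) =
      ∑ k ∈ Finset.range 3, p.coeff k • fun y : 𝕊 => inner ℝ x (y : E) ^ k := by
    ext y
    simp [eval_eq_sum_range' (p := p) (n := 3) (by omega), Finset.sum_apply]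
  rw [h]
  refine Submodule.sum_mem _ fun k hk => Submodule.smul_mem _ _ ?_
  have hk3 : k < 3 := Finset.mem_range.1 hk
  interval_cases k
  · simp only [pow_zero]
    exact one_mem_sphereQuadratics
  · simp only [pow_one]
    exact inner_mem_sphereQuadratics x
  · exact inner_sq_mem_sphereQuadratics x

theorem prod_dist_sq_sub_sq_mem_sphereQuadratics {x : E} (hx : ‖x‖ = 1) {A : Finset ℝ}
    (hA : A.card ≤ 2) :
    (fun y : 𝕊 => ∏ a ∈ A, (dist x y ^ 2 - a ^ 2)) ∈ sphereQuadratics d := by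
  have h : (fun y : 𝕊 => ∏ a ∈ A, (dist x y ^ 2 - a ^ 2)) =
      fun y => (∏ a ∈ A, (C (-2) * X + C (2 - a ^ 2))).eval (inner ℝ x (y : E)) := by
    ext y
    simp only [eval_prod, eval_add, eval_mul, eval_C, eval_X,
      dist_sq_eq_two_sub_two_inner hx (norm_eq_of_mem_sphere y)]
    exact Finset.prod_congr rfl fun a _ => by ring
  rw [h]
  exact eval_inner_mem_sphereQuadratics ((natDegree_prod_linear_le _ _ _).trans hA) x

theorem dist_mem_distancesFrom {X : Finset E} {x y : E} (hy : y ∈ X) (hne : y ≠ x) :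
    dist x y ∈ distancesFrom X x :=
  Finset.mem_image.2 ⟨y, Finset.mem_erase.2 ⟨hne, hy⟩, rfl⟩

theorem pos_of_mem_distancesFrom {X : Finset E} {x : E} {a : ℝ} (ha : a ∈ distancesFrom X x) :
    0 < a := by
  obtain ⟨y, hy, rfl⟩ := Finset.mem_image.1 ha
  exact dist_pos.2 (Finset.ne_of_mem_erase hy).symm

end

theorem stmt11_general (d : ℕ) (X : Finset (EuclideanSpace ℝ (Fin d)))
    (hsph : ∀ x ∈ X, ‖x‖ = 1)
    (hloc : ∀ x ∈ X, (distancesFrom X x).card ≤ 2) :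
    X.card ≤ (d + 1).choose 2 + d := by
  let F : X → sphere (0 : EuclideanSpace ℝ (Fin d)) 1 → ℝ := fun x y =>
    ∏ a ∈ distancesFrom X x, (dist (x : EuclideanSpace ℝ (Fin d)) y ^ 2 - a ^ 2)
  have hF : LinearIndependent ℝ F := by
    refine linearIndependent_of_apply_eq_zero_of_ne
      (fun y => ⟨y, mem_sphere_zero_iff_norm.2 (hsph y y.2)⟩) (fun x y hxy => ?_) fun x => ?_
    · exact Finset.prod_eq_zero (dist_mem_distancesFrom y.2 fun h => hxy (Subtype.ext h).symm)
        (sub_self _)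
    · refine Finset.prod_ne_zero_iff.2 fun a ha => ?_
      simpa using (pos_of_mem_distancesFrom ha).ne'
  have hF_mem : ∀ x, F x ∈ sphereQuadratics d := fun x =>
    prod_dist_sq_sub_sq_mem_sphereQuadratics (hsph x x.2) (hloc x x.2)
  calc X.card = Fintype.card X := (Fintype.card_coe X).symm
    _ ≤ (Set.range F).finrank ℝ := linearIndependent_iff_card_le_finrank_span.1 hF
    _ ≤ finrank ℝ (sphereQuadratics d) :=
      Submodule.finrank_mono (Submodule.span_le.2 (Set.range_subset_iff.2 hF_mem))
    _ ≤ (d + 1).choose 2 + d := finrank_sphereQuadratics_le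

/-- Fisher-type bound: every locally two-distance set on the unit sphere `S^{d-1} ⊆ ℝ^d` has
at most `binom(d+1,2) + d` points. -/
theorem stmt11 (d : ℕ) (hd : 2 ≤ d) (X : Finset (EuclideanSpace ℝ (Fin d)))
    (hsph : ∀ x ∈ X, ‖x‖ = 1)
    (hloc : ∀ x ∈ X, (distancesFrom X x).card ≤ 2) :
    X.card ≤ (d + 1).choose 2 + d :=
  stmt11_general d X hsph hloc
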